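/- arXiv:1804.08127 — 2 statements merged into one kernel-verified Lean document; each statement's English description precedes it below -/
import Mathlib

section
/- For every α ∈ (0,1) and every real x > 0, x^α = C · ∫₀^∞ x/(t^{1/α} + x) dt, where C = sin(απ)/(απ). -/
/-!
Substituting `t = u ^ α` turns the integral into `α x ∫₀^∞ u^(α-1) / (u + x) du`, and
the scaling `u = x s` reduces this to `α x^α ∫₀^∞ s^(α-1) / (1 + s) ds`. Under
`y = s / (1 + s)` the last integral is the beta integral `B(α, 1 - α) = Γ(α) Γ(1 - α)`,
which equals `π / sin (π α)` by the reflection formula.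
-/

open Real MeasureTheory Set

theorem integral_Ioo_rpow_mul_one_sub_rpow {a b : ℝ} (ha : 0 < a) (hb : 0 < b) :
    ∫ y in Ioo (0 : ℝ) 1, y ^ (a - 1) * (1 - y) ^ (b - 1) =
      Gamma a * Gamma b / Gamma (a + b) := by
  have hbeta := Complex.betaIntegral_eq_Gamma_mul_div a b (by simpa) (by simpa)
  rw [Complex.betaIntegral, ← Complex.ofReal_add, Complex.Gamma_ofReal, Complex.Gamma_ofReal,
    Complex.Gamma_ofReal, ← Complex.ofReal_mul, ← Complex.ofReal_div] at hbeta
  rw [← integral_Ioc_eq_integral_Ioo, ← intervalIntegral.integral_of_le zero_le_one]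
  refine Complex.ofReal_injective (hbeta ▸ ?_)
  rw [← intervalIntegral.integral_ofReal]
  refine intervalIntegral.integral_congr fun y hy => ?_
  rw [uIcc_of_le zero_le_one] at hy
  push_cast [Complex.ofReal_cpow hy.1, Complex.ofReal_cpow (sub_nonneg.2 hy.2)]
  rfl

theorem image_div_one_add_Ioi : (fun t : ℝ => t / (1 + t)) '' Ioi 0 = Ioo 0 1 := by
  ext y
  constructor
  · rintro ⟨t, ht, rfl⟩
    have ht : 0 < t := ht
    exact ⟨by positivity, (div_lt_one (by positivity)).2 (by linarith)⟩
  · rintro ⟨hy0, hy1⟩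
    refine ⟨y / (1 - y), div_pos hy0 (by linarith), ?_⟩
    have : 1 - y ≠ 0 := by linarith
    field_simp
    ring

theorem hasDerivAt_div_one_add {t : ℝ} (ht : 1 + t ≠ 0) :
    HasDerivAt (fun t : ℝ => t / (1 + t)) ((1 + t) ^ 2)⁻¹ t := by
  have h : HasDerivAt (fun t : ℝ => t / (1 + t)) ((1 * (1 + t) - t * 1) / (1 + t) ^ 2) t :=
    (hasDerivAt_id' t).div ((hasDerivAt_id' t).const_add 1) ht
  rwa [show (1 * (1 + t) - t * 1) / (1 + t) ^ 2 = ((1 + t) ^ 2)⁻¹ by ring] at h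

theorem injOn_div_one_add_Ioi : InjOn (fun t : ℝ => t / (1 + t)) (Ioi 0) := by
  intro a ha b hb hab
  have ha : 0 < 1 + a := by linarith [mem_Ioi.1 ha]
  have hb : 0 < 1 + b := by linarith [mem_Ioi.1 hb]
  field_simp at hab
  linarith

theorem integral_Ioi_rpow_div_one_add_rpow {a b : ℝ} (ha : 0 < a) (hb : 0 < b) :
    ∫ t in Ioi (0 : ℝ), t ^ (a - 1) / (1 + t) ^ (a + b) =
      Gamma a * Gamma b / Gamma (a + b) := by
  have hsubst := integral_image_eq_integral_abs_deriv_smul measurableSet_Ioi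
    (fun t ht => (hasDerivAt_div_one_add (by linarith [mem_Ioi.1 ht])).hasDerivWithinAt)
    injOn_div_one_add_Ioi fun y => y ^ (a - 1) * (1 - y) ^ (b - 1)
  rw [image_div_one_add_Ioi, integral_Ioo_rpow_mul_one_sub_rpow ha hb] at hsubst
  rw [hsubst]
  refine setIntegral_congr_fun measurableSet_Ioi fun t ht => ?_
  have ht : 0 < t := ht
  have hs : 0 < 1 + t := by linarith
  have hsub : 1 - t / (1 + t) = (1 + t)⁻¹ := by field_simp; ring
  have hexp :
      (1 + t) ^ (a + b) = (1 + t) ^ (a - 1) * (1 + t) ^ (b - 1) * (1 + t) ^ (2 : ℝ) := by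
    rw [← rpow_add hs, ← rpow_add hs]
    ring_nf
  rw [hsub, smul_eq_mul, abs_of_pos (by positivity), div_rpow ht.le hs.le, inv_rpow hs.le,
    hexp, rpow_two]
  field_simp

theorem integral_Ioi_rpow_div_one_add {a : ℝ} (ha0 : 0 < a) (ha1 : a < 1) :
    ∫ t in Ioi (0 : ℝ), t ^ (a - 1) / (1 + t) = π / sin (π * a) := by
  simpa [Gamma_mul_Gamma_one_sub] using integral_Ioi_rpow_div_one_add_rpow ha0 (sub_pos.2 ha1)

theorem integral_Ioi_rpow_div_add {a x : ℝ} (ha0 : 0 < a) (ha1 : a < 1) (hx : 0 < x) :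
    ∫ u in Ioi (0 : ℝ), u ^ (a - 1) / (u + x) = x ^ (a - 1) * (π / sin (π * a)) := by
  have hscale := integral_comp_mul_left_Ioi (fun u => u ^ (a - 1) / (u + x)) 0 hx
  have hintegrand : ∀ s ∈ Ioi (0 : ℝ),
      (x * s) ^ (a - 1) / (x * s + x) = x⁻¹ * x ^ (a - 1) * (s ^ (a - 1) / (1 + s)) := by
    intro s hs
    rw [mul_rpow hx.le (le_of_lt hs), show x * s + x = x * (1 + s) by ring]
    field_simp
  rw [mul_zero, setIntegral_congr_fun measurableSet_Ioi hintegrand, integral_const_mul,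
    integral_Ioi_rpow_div_one_add ha0 ha1, smul_eq_mul] at hscale
  rw [← mul_right_inj' (inv_ne_zero hx.ne'), ← hscale]
  ring

/-- For `α ∈ (0,1)` and real `x > 0`,
`x^α = (sin(απ)/(απ)) · ∫₀^∞ x/(t^{1/α} + x) dt`. -/
theorem rpow_eq_integral (α x : ℝ) (hα0 : 0 < α) (hα1 : α < 1) (hx : 0 < x) :
    x ^ α = (Real.sin (α * π) / (α * π)) *
      ∫ t in Set.Ioi (0 : ℝ), x / (t ^ (1 / α) + x) := by
  have hsubst := integral_comp_rpow_Ioi_of_pos (g := fun t => x / (t ^ (1 / α) + x)) hα0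
  have hintegrand : ∀ u ∈ Ioi (0 : ℝ),
      (α * u ^ (α - 1)) • (x / ((u ^ α) ^ (1 / α) + x)) =
        α * x * (u ^ (α - 1) / (u + x)) := by
    intro u hu
    rw [← rpow_mul (le_of_lt hu), mul_one_div_cancel hα0.ne', rpow_one, smul_eq_mul]
    ring
  rw [setIntegral_congr_fun measurableSet_Ioi hintegrand, integral_const_mul,
    integral_Ioi_rpow_div_add hα0 hα1 hx] at hsubst
  have hsin : sin (π * α) ≠ 0 :=
    (sin_pos_of_pos_of_lt_pi (by positivity) (by nlinarith [pi_pos])).ne'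
  rw [← hsubst, mul_comm α π]
  field_simp
  rw [mul_comm, ← rpow_add_one hx.ne', sub_add_cancel]
end

section
/- Let p be a polynomial of degree n with sup_{|z|≤1} |p(z)| ≤ M. Then sup_{|z|≤1} |p'(z)| ≤ n·M. -/
/-!
If `M < ‖c‖`, the polynomial `c zⁿ - p(z)` has all its roots in the open unit disk, since
`‖p(z)‖ ≤ M ‖z‖ⁿ` outside the disk (maximum modulus applied to the reflected polynomial
`zⁿ p(1/z)`). By Gauss–Lucas its derivative `n c zⁿ⁻¹ - p'(z)` has no root on the unit circle.
For `‖z‖ = 1` and `n ≥ 1`, `n c zⁿ⁻¹` takes every value of norm `> nM` as `c` ranges over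
`‖c‖ > M`, so `‖p'(z)‖ ≤ nM` on the circle, hence on the disk by maximum modulus again.
-/

open Polynomial Metric

theorem Complex.norm_le_of_forall_norm_eq_one_le {F : Type*} [NormedAddCommGroup F]
    [NormedSpace ℂ F] {f : ℂ → F} (hf : Differentiable ℂ f) {M : ℝ}
    (h : ∀ w : ℂ, ‖w‖ = 1 → ‖f w‖ ≤ M) {w : ℂ} (hw : ‖w‖ ≤ 1) : ‖f w‖ ≤ M := by
  refine Complex.norm_le_of_forall_mem_frontier_norm_le (isBounded_ball (x := 0) (r := 1))
    hf.diffContOnCl (fun z hz => h z ?_) ?_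
  · rwa [frontier_ball 0 one_ne_zero, mem_sphere_zero_iff_norm] at hz
  · rwa [closure_ball 0 one_ne_zero, mem_closedBall_zero_iff]

namespace Polynomial

theorem mem_of_convex_of_eval_derivative_eq_zero {P : ℂ[X]} {s : Set ℂ} (hs : Convex ℝ s)
    (hP : 0 < P.degree) (hroots : P.rootSet ℂ ⊆ s) {z : ℂ}
    (hz : P.derivative.eval z = 0) : z ∈ s := by
  have hP' : P.derivative ≠ 0 :=
    derivative_ne_zero.mpr (natDegree_pos_iff_degree_pos.mpr hP).ne'
  exact convexHull_min hroots hs <|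
    rootSet_derivative_subset_convexHull_rootSet hP (mem_rootSet.mpr ⟨hP', by simpa⟩)

theorem eval_reflect_inv_mul_pow {p : ℂ[X]} {n : ℕ} (hdeg : p.natDegree ≤ n) {z : ℂ}
    (hz : z ≠ 0) : (reflect n p).eval z⁻¹ * z ^ n = p.eval z := by
  let := invertibleOfNonzero hz
  simpa only [invOf_eq_inv, eval₂_id] using eval₂_reflect_mul_pow (RingHom.id ℂ) z n p hdeg

section UnitDisk

variable {p : ℂ[X]} {n : ℕ} {M : ℝ}

theorem norm_eval_reflect_le (hdeg : p.natDegree ≤ n)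
    (hbound : ∀ z : ℂ, ‖z‖ ≤ 1 → ‖p.eval z‖ ≤ M) {w : ℂ} (hw : ‖w‖ ≤ 1) :
    ‖(reflect n p).eval w‖ ≤ M := by
  refine Complex.norm_le_of_forall_norm_eq_one_le (reflect n p).differentiable (fun w hw => ?_) hw
  have hw0 : w ≠ 0 := norm_ne_zero_iff.mp (hw.symm ▸ one_ne_zero)
  have h := eval_reflect_inv_mul_pow hdeg (inv_ne_zero hw0)
  rw [inv_inv] at h
  have := hbound w⁻¹ (by rw [norm_inv, hw, inv_one])
  rwa [← h, norm_mul, norm_pow, norm_inv, hw, inv_one, one_pow, mul_one] at this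

theorem norm_coeff_le (hdeg : p.natDegree ≤ n)
    (hbound : ∀ z : ℂ, ‖z‖ ≤ 1 → ‖p.eval z‖ ≤ M) : ‖p.coeff n‖ ≤ M := by
  have h := norm_eval_reflect_le hdeg hbound (norm_zero.trans_le zero_le_one)
  rwa [← coeff_zero_eq_eval_zero, coeff_reflect, revAt_zero] at h

theorem norm_eval_le_mul_norm_pow (hdeg : p.natDegree ≤ n)
    (hbound : ∀ z : ℂ, ‖z‖ ≤ 1 → ‖p.eval z‖ ≤ M) {z : ℂ} (hz : 1 ≤ ‖z‖) :
    ‖p.eval z‖ ≤ M * ‖z‖ ^ n := by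
  have hz0 : z ≠ 0 := norm_pos_iff.mp (zero_lt_one.trans_le hz)
  rw [← eval_reflect_inv_mul_pow hdeg hz0, norm_mul, norm_pow]
  refine mul_le_mul_of_nonneg_right (norm_eval_reflect_le hdeg hbound ?_) (by positivity)
  rw [norm_inv]
  exact inv_le_one_of_one_le₀ hz

theorem rootSet_C_mul_X_pow_sub_subset_ball (hdeg : p.natDegree ≤ n)
    (hbound : ∀ z : ℂ, ‖z‖ ≤ 1 → ‖p.eval z‖ ≤ M) {c : ℂ} (hc : M < ‖c‖) :
    (C c * X ^ n - p).rootSet ℂ ⊆ ball 0 1 := by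
  intro r hr
  rw [mem_rootSet, coe_aeval_eq_eval, eval_sub, eval_mul, eval_C, eval_pow, eval_X,
    sub_eq_zero] at hr
  rw [mem_ball_zero_iff]
  by_contra! hr1
  have h := norm_eval_le_mul_norm_pow hdeg hbound hr1
  rw [← hr.2, norm_mul, norm_pow] at h
  exact hc.not_ge (le_of_mul_le_mul_right h (by positivity))

theorem norm_eval_derivative_le_of_norm_eq_one (hdeg : p.natDegree ≤ n)
    (hbound : ∀ z : ℂ, ‖z‖ ≤ 1 → ‖p.eval z‖ ≤ M) {z : ℂ} (hz : ‖z‖ = 1) :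
    ‖p.derivative.eval z‖ ≤ n * M := by
  rcases Nat.eq_zero_or_pos n with rfl | hn
  · simp [derivative_of_natDegree_zero (Nat.le_zero.mp hdeg)]
  by_contra! hlt
  have hz0 : z ≠ 0 := norm_ne_zero_iff.mp (hz.symm ▸ one_ne_zero)
  have hn0 : (n : ℂ) ≠ 0 := Nat.cast_ne_zero.mpr hn.ne'
  set c := p.derivative.eval z / (n * z ^ (n - 1))
  have hc : M < ‖c‖ := by
    rwa [norm_div, norm_mul, norm_pow, hz, one_pow, mul_one, Complex.norm_natCast,
      lt_div_iff₀ (by exact_mod_cast hn), mul_comm]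
  have hcoeff : (C c * X ^ n - p).coeff n ≠ 0 := by
    rw [coeff_sub, coeff_C_mul_X_pow, if_pos rfl, sub_ne_zero]
    intro hc_eq
    exact (norm_coeff_le hdeg hbound).not_gt (hc_eq ▸ hc)
  have hdeg_pos : 0 < (C c * X ^ n - p).degree :=
    (WithBot.coe_pos.mpr hn).trans_le (le_degree_of_ne_zero hcoeff)
  have hcrit : (C c * X ^ n - p).derivative.eval z = 0 := by
    simp only [derivative_sub, derivative_C_mul_X_pow, eval_sub, eval_mul, eval_C, eval_pow,
      eval_X, c]
    field_simp
    ring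
  have hz_ball := mem_of_convex_of_eval_derivative_eq_zero (convex_ball 0 1) hdeg_pos
    (rootSet_C_mul_X_pow_sub_subset_ball hdeg hbound hc) hcrit
  rw [mem_ball_zero_iff, hz] at hz_ball
  exact lt_irrefl 1 hz_ball

end UnitDisk

end Polynomial

/-- Bernstein's inequality: if `p` is a polynomial of degree `n` with
`|p(z)| ≤ M` on the closed unit disk, then `|p'(z)| ≤ nM` there. -/
theorem bernstein_inequality (p : Polynomial ℂ) (n : ℕ) (M : ℝ)
    (hdeg : p.natDegree ≤ n)
    (hbound : ∀ z : ℂ, ‖z‖ ≤ 1 → ‖p.eval z‖ ≤ M) :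
    ∀ z : ℂ, ‖z‖ ≤ 1 → ‖(Polynomial.derivative p).eval z‖ ≤ n * M := fun _ hz =>
  Complex.norm_le_of_forall_norm_eq_one_le p.derivative.differentiable
    (fun _ hw => norm_eval_derivative_le_of_norm_eq_one hdeg hbound hw) hz
end
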